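/- Let C be a finite set of candidates, N = {1,…,n} a set of voters with approval sets v_i ⊆ C, and k ≥ 1. Consider the matrix A with rows indexed by N ⊎ {⋆} and columns indexed by (N × {1,…,k}) ⊎ C, defined by: A[i, (j,ℓ)] = -1 if j = i and 0 otherwise; A[i, c] = 1 if c ∈ v_i and 0 otherwise; A[⋆, (j,ℓ)] = 0; and A[⋆, c] = 1 for all c ∈ C. If there exists a linear order ◁ on C such that every approval set v_i is an interval of ◁ (i.e., the profile has the candidate-interval/single-peaked property), then A is totally unimodular. -/

import Mathlib

/-- A rational matrix is totally unimodular if every square submatrix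
(given by a choice of distinct rows and distinct columns) has determinant
in `{-1, 0, 1}`. -/
def IsTU {R C : Type*} (A : Matrix R C ℚ) : Prop :=
  ∀ (k : ℕ) (f : Fin k → R) (g : Fin k → C),
    Function.Injective f → Function.Injective g →
      (A.submatrix f g).det ∈ ({-1, 0, 1} : Set ℚ)

/-!
The voter columns `(j, ℓ)` of the matrix are the unit vectors `-e_j`, and adjoining such columns
preserves total unimodularity, so everything reduces to the candidate block. After ordering the
candidates by `◁` its rows (including the all-ones row `⋆`) are `0/1` intervals. For a square
interval matrix `M`, subtracting from each column its left neighbour is a unimodular column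
operation that turns every row into `e_a - e_{b+1}` (the `-1` missing when the interval ends at
the last column); a square matrix with at most one `1` and one `-1` per row has determinant in
`{-1, 0, 1}`, by expanding along a row with at most one nonzero entry, or, if there is none, because
then all rows sum to zero.
-/

open Matrix

section SignType

variable {R : Type*} [CommRing R]

lemma mul_mem_range_signType {a b : R} (ha : a ∈ Set.range (SignType.cast : SignType → R))
    (hb : b ∈ Set.range (SignType.cast : SignType → R)) :
    a * b ∈ Set.range (SignType.cast : SignType → R) := by
  obtain ⟨s, rfl⟩ := ha
  obtain ⟨t, rfl⟩ := hb
  exact ⟨s * t, by simp⟩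

lemma neg_one_pow_mem_range_signType (n : ℕ) :
    (-1 : R) ^ n ∈ Set.range (SignType.cast : SignType → R) :=
  ⟨(-1) ^ n, by simp⟩

lemma sum_eq_zero_of_two_ne_zero {ι : Type*} [Fintype ι] {x : ι → R}
    (hx : ∀ j, x j ∈ Set.range (SignType.cast : SignType → R))
    (h_one : ∀ j₁ j₂, x j₁ = 1 → x j₂ = 1 → j₁ = j₂)
    (h_neg_one : ∀ j₁ j₂, x j₁ = -1 → x j₂ = -1 → j₁ = j₂)
    {j₁ j₂ : ι} (hne : j₁ ≠ j₂) (h₁ : x j₁ ≠ 0) (h₂ : x j₂ ≠ 0) : ∑ j, x j = 0 := by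
  have unit_of_ne_zero : ∀ j, x j ≠ 0 → x j = 1 ∨ x j = -1 := by
    intro j hj
    obtain ⟨s, hs⟩ := hx j
    cases s <;> simp_all [eq_comm]
  obtain ⟨a, b, hab, ha, hb⟩ : ∃ a b, a ≠ b ∧ x a = 1 ∧ x b = -1 := by
    rcases unit_of_ne_zero j₁ h₁ with e₁ | e₁ <;> rcases unit_of_ne_zero j₂ h₂ with e₂ | e₂
    exacts [absurd (h_one _ _ e₁ e₂) hne, ⟨_, _, hne, e₁, e₂⟩, ⟨_, _, hne.symm, e₂, e₁⟩,
      absurd (h_neg_one _ _ e₁ e₂) hne]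
  rw [Fintype.sum_eq_add a b hab, ha, hb, add_neg_cancel]
  rintro j ⟨hja, hjb⟩
  by_contra hj
  rcases unit_of_ne_zero j hj with e | e
  exacts [hja (h_one _ _ e ha), hjb (h_neg_one _ _ e hb)]

end SignType

namespace Matrix

variable {R : Type*} [CommRing R]

theorem det_mem_range_signType_of_unique_one_of_unique_neg_one {s : ℕ}
    (N : Matrix (Fin s) (Fin s) R)
    (hN : ∀ i j, N i j ∈ Set.range (SignType.cast : SignType → R))
    (h_one : ∀ i j₁ j₂, N i j₁ = 1 → N i j₂ = 1 → j₁ = j₂)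
    (h_neg_one : ∀ i j₁ j₂, N i j₁ = -1 → N i j₂ = -1 → j₁ = j₂) :
    N.det ∈ Set.range (SignType.cast : SignType → R) := by
  induction s with
  | zero => exact ⟨1, by simp⟩
  | succ t ih =>
    by_cases hrow : ∃ i, ∀ j₁ j₂, N i j₁ ≠ 0 → N i j₂ ≠ 0 → j₁ = j₂
    · obtain ⟨i, hi⟩ := hrow
      by_cases hzero : ∀ j, N i j = 0
      · exact ⟨0, by rw [SignType.coe_zero, det_eq_zero_of_row_eq_zero i hzero]⟩
      push Not at hzero
      obtain ⟨j, hj⟩ := hzero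
      rw [det_succ_row N i, Finset.sum_eq_single j ?_ (by simp)]
      · refine mul_mem_range_signType (mul_mem_range_signType
          (neg_one_pow_mem_range_signType _) (hN i j)) (ih _ (fun _ _ => hN _ _) ?_ ?_)
        · exact fun _ _ _ h₁ h₂ => Fin.succAbove_right_injective (h_one _ _ _ h₁ h₂)
        · exact fun _ _ _ h₁ h₂ => Fin.succAbove_right_injective (h_neg_one _ _ _ h₁ h₂)
      · intro j' _ hj'
        rw [show N i j' = 0 from not_not.mp fun h => hj' (hi j' j h hj), mul_zero, zero_mul]
    · push Not at hrow
      -- every row is then `e_a - e_b`, so the all-ones vector lies in the kernel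
      have hsum : N *ᵥ (fun _ => 1) = 0 := by
        ext i
        obtain ⟨j₁, j₂, h₁, h₂, hne⟩ := hrow i
        simpa [mulVec, dotProduct] using
          sum_eq_zero_of_two_ne_zero (hN i) (h_one i) (h_neg_one i) hne h₁ h₂
      exact ⟨0, by rw [SignType.coe_zero, det_eq_zero_of_mulVec_eq_zero_of_mem_nonZeroDivisors
        hsum (i := 0) (one_mem _)]⟩

variable {ι κ : Type*}

structure IsInterval [LinearOrder κ] (A : Matrix ι κ R) : Prop where
  zero_or_one : ∀ i j, A i j = 0 ∨ A i j = 1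
  eq_one_of_lt_of_lt : ∀ i {a b c}, a < b → b < c → A i a = 1 → A i c = 1 → A i b = 1

lemma IsInterval.submatrix [LinearOrder κ] {ι' κ' : Type*} [LinearOrder κ'] {A : Matrix ι κ R}
    (hA : A.IsInterval) (f : ι' → ι) {g : κ' → κ} (hg : StrictMono g) :
    (A.submatrix f g).IsInterval where
  zero_or_one i j := hA.zero_or_one (f i) (g j)
  eq_one_of_lt_of_lt i _ _ _ hab hbc := hA.eq_one_of_lt_of_lt (f i) (hg hab) (hg hbc)

variable (R) in
/-- Right multiplication by `diffMatrix t` replaces column `c + 1` by column `c + 1` minus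
column `c`; it turns each interval row into a row with one `1` at its left end and one `-1`
just past its right end. -/
def diffMatrix (t : ℕ) : Matrix (Fin (t + 1)) (Fin (t + 1)) R :=
  of fun j c => if j = c then 1 else if (j : ℕ) + 1 = c then -1 else 0

variable (R) in
lemma det_diffMatrix (t : ℕ) : (diffMatrix R t).det = 1 := by
  rw [det_of_isUpperTriangular]
  · simp [diffMatrix]
  · intro j c (hcj : c < j)
    have : ¬ (j : ℕ) + 1 = c := by omega
    simp [diffMatrix, hcj.ne', this]

lemma mul_diffMatrix_apply_zero {t : ℕ} (M : Matrix ι (Fin (t + 1)) R) (i : ι) :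
    (M * diffMatrix R t) i 0 = M i 0 := by
  rw [mul_apply, Fintype.sum_eq_single 0]
  · simp [diffMatrix]
  · intro j hj
    simp [diffMatrix, hj]

lemma mul_diffMatrix_apply_succ {t : ℕ} (M : Matrix ι (Fin (t + 1)) R) (i : ι) (c : Fin t) :
    (M * diffMatrix R t) i c.succ = M i c.succ - M i c.castSucc := by
  rw [mul_apply, Fintype.sum_eq_add c.succ c.castSucc c.castSucc_lt_succ.ne']
  · simp [diffMatrix, c.castSucc_lt_succ.ne, sub_eq_add_neg]
  · rintro j ⟨h₁, h₂⟩
    have : (j : ℕ) ≠ c := fun h => h₂ (Fin.ext h)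
    simp [diffMatrix, h₁, this]

section CharZero

variable [CharZero R]

lemma eq_one_and_eq_zero_of_sub_eq_one {x y : R} (hx : x = 0 ∨ x = 1) (hy : y = 0 ∨ y = 1)
    (h : x - y = 1) : x = 1 ∧ y = 0 := by
  rcases hx with rfl | rfl <;> rcases hy with rfl | rfl <;> norm_num at h
  exact ⟨rfl, rfl⟩

variable {t : ℕ} {M : Matrix ι (Fin (t + 1)) R}

lemma IsInterval.le_of_mul_diffMatrix_eq_one (hM : M.IsInterval) {i : ι} {c : Fin (t + 1)}
    (h : (M * diffMatrix R t) i c = 1) : M i c = 1 ∧ ∀ d, M i d = 1 → c ≤ d := by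
  induction c using Fin.cases with
  | zero => exact ⟨by rwa [mul_diffMatrix_apply_zero] at h, fun d _ => Fin.zero_le d⟩
  | succ c =>
    rw [mul_diffMatrix_apply_succ] at h
    obtain ⟨hc, hc'⟩ :=
      eq_one_and_eq_zero_of_sub_eq_one (hM.zero_or_one i _) (hM.zero_or_one i _) h
    refine ⟨hc, fun d hd => ?_⟩
    by_contra! hdc
    rcases (Fin.le_castSucc_iff.mpr hdc).lt_or_eq with hlt | rfl
    · simp [hM.eq_one_of_lt_of_lt i hlt c.castSucc_lt_succ hd hc] at hc'
    · simp [hd] at hc'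

lemma IsInterval.isLeast_of_mul_diffMatrix_eq_neg_one (hM : M.IsInterval) {i : ι}
    {c : Fin (t + 1)} (h : (M * diffMatrix R t) i c = -1) :
    IsLeast {b | ∀ d, M i d = 1 → d < b} c := by
  induction c using Fin.cases with
  | zero =>
    rw [mul_diffMatrix_apply_zero] at h
    rcases hM.zero_or_one i 0 with h₀ | h₀ <;> norm_num [h₀] at h
  | succ c =>
    rw [mul_diffMatrix_apply_succ] at h
    obtain ⟨hc', hc⟩ := eq_one_and_eq_zero_of_sub_eq_one (hM.zero_or_one i _)
      (hM.zero_or_one i _) (by rw [← neg_sub, h, neg_neg])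
    refine ⟨fun d hd => ?_, fun b hb => Fin.castSucc_lt_iff_succ_le.mp (hb _ hc')⟩
    by_contra! hcd
    rcases hcd.lt_or_eq with hlt | rfl
    · simp [hM.eq_one_of_lt_of_lt i c.castSucc_lt_succ hlt hc' hd] at hc
    · simp [hd] at hc

lemma IsInterval.mul_diffMatrix_mem_range_signType (hM : M.IsInterval) (i : ι)
    (c : Fin (t + 1)) :
    (M * diffMatrix R t) i c ∈ Set.range (SignType.cast : SignType → R) := by
  rw [SignType.range_eq]
  induction c using Fin.cases with
  | zero => rcases hM.zero_or_one i 0 with h | h <;> simp [mul_diffMatrix_apply_zero, h]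
  | succ c =>
    rw [mul_diffMatrix_apply_succ]
    rcases hM.zero_or_one i c.succ with h₁ | h₁ <;>
      rcases hM.zero_or_one i c.castSucc with h₂ | h₂ <;> simp [h₁, h₂]

theorem IsInterval.det_mem_range_signType {s : ℕ} {M : Matrix (Fin s) (Fin s) R}
    (hM : M.IsInterval) : M.det ∈ Set.range (SignType.cast : SignType → R) := by
  cases s with
  | zero => exact ⟨1, by simp⟩
  | succ t =>
    rw [← mul_one M.det, ← det_diffMatrix R t, ← det_mul]
    refine det_mem_range_signType_of_unique_one_of_unique_neg_one _
      hM.mul_diffMatrix_mem_range_signType ?_ ?_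
    · intro i c₁ c₂ h₁ h₂
      have h₁ := hM.le_of_mul_diffMatrix_eq_one h₁
      have h₂ := hM.le_of_mul_diffMatrix_eq_one h₂
      exact le_antisymm (h₁.2 _ h₂.1) (h₂.2 _ h₁.1)
    · intro i c₁ c₂ h₁ h₂
      exact (hM.isLeast_of_mul_diffMatrix_eq_neg_one h₁).unique
        (hM.isLeast_of_mul_diffMatrix_eq_neg_one h₂)

theorem IsInterval.isTotallyUnimodular [LinearOrder κ] {A : Matrix ι κ R} (hA : A.IsInterval) :
    A.IsTotallyUnimodular := by
  intro s f g _ hg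
  set σ := Tuple.sort g
  have hsorted : StrictMono (g ∘ σ) :=
    (Tuple.monotone_sort g).strictMono_of_injective (hg.comp σ.injective)
  have hdet : (A.submatrix f g).det = Equiv.Perm.sign σ * (A.submatrix f (g ∘ σ)).det := by
    rw [show A.submatrix f (g ∘ σ) = (A.submatrix f g).submatrix id σ from rfl, det_permute',
      ← mul_assoc, ← Int.cast_mul, ← Units.val_mul, Int.units_mul_self, Units.val_one,
      Int.cast_one, one_mul]
  rw [hdet]
  refine mul_mem_range_signType ?_ (hA.submatrix f hsorted).det_mem_range_signType
  rcases Int.units_eq_one_or (Equiv.Perm.sign σ) with h | h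
  exacts [⟨1, by simp [h]⟩, ⟨-1, by simp [h]⟩]

end CharZero

lemma IsTotallyUnimodular.unitlike_fromCols {m n n' : Type*} [DecidableEq m] {A : Matrix m n R}
    {B : Matrix m n' R} (hA : A.IsTotallyUnimodular)
    (hB : Nonempty m → ∀ j, ∃ i, ∃ s : SignType, Bᵀ j = Pi.single i s.cast) :
    (fromCols B A).IsTotallyUnimodular := by
  have hAB := (hA.transpose.fromRows_unitlike hB).transpose
  rw [transpose_fromRows, transpose_transpose, transpose_transpose] at hAB
  convert hAB.reindex (Equiv.refl m) (Equiv.sumComm n n') using 1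
  ext i (j | j) <;> rfl

end Matrix

lemma isTU_iff_isTotallyUnimodular {ι κ : Type*} (A : Matrix ι κ ℚ) :
    IsTU A ↔ A.IsTotallyUnimodular := by
  have : Set.range (SignType.cast : SignType → ℚ) = {-1, 0, 1} := by
    rw [SignType.range_eq]
    simp [Set.insert_comm]
  rw [IsTU, IsTotallyUnimodular, this]

def voterSlackMatrix (n k : ℕ) : Matrix (Fin n ⊕ Unit) (Fin n × Fin k) ℚ :=
  of fun r jl => if r = Sum.inl jl.1 then -1 else 0

def approvalMatrix {n m : ℕ} (v : Fin n → Finset (Fin m)) : Matrix (Fin n ⊕ Unit) (Fin m) ℚ :=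
  of fun r c => Sum.elim (fun i => if c ∈ v i then 1 else 0) 1 r

lemma Matrix.IsTotallyUnimodular.voterSlackMatrix_fromCols {n k : ℕ} {κ : Type*}
    {A : Matrix (Fin n ⊕ Unit) κ ℚ} (hA : A.IsTotallyUnimodular) :
    (fromCols (voterSlackMatrix n k) A).IsTotallyUnimodular :=
  hA.unitlike_fromCols fun _ jl =>
    ⟨Sum.inl jl.1, SignType.neg, by ext; simp [voterSlackMatrix, Pi.single_apply]⟩

lemma approvalMatrix_isInterval {n m : ℕ} {v : Fin n → Finset (Fin m)} (pos : Equiv.Perm (Fin m))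
    (hpos : ∀ (i : Fin n) (a b c : Fin m),
      pos a < pos b → pos b < pos c → a ∈ v i → c ∈ v i → b ∈ v i) :
    ((approvalMatrix v).submatrix id pos.symm).IsInterval where
  zero_or_one r c := by
    rcases r with i | _
    · by_cases h : pos.symm c ∈ v i <;> simp [approvalMatrix, h]
    · simp [approvalMatrix]
  eq_one_of_lt_of_lt r a b c hab hbc ha hc := by
    rcases r with i | _
    · simp only [approvalMatrix, submatrix_apply, of_apply, id_eq, Sum.elim_inl, ite_eq_left_iff,
        zero_ne_one, imp_false, not_not] at ha hc ⊢
      exact hpos i _ _ _ (by simpa using hab) (by simpa using hbc) ha hc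
    · rfl

lemma approvalMatrix_isTotallyUnimodular {n m : ℕ} {v : Fin n → Finset (Fin m)}
    (pos : Equiv.Perm (Fin m)) (hpos : ∀ (i : Fin n) (a b c : Fin m),
      pos a < pos b → pos b < pos c → a ∈ v i → c ∈ v i → b ∈ v i) :
    (approvalMatrix v).IsTotallyUnimodular := by
  simpa [submatrix_submatrix] using
    (approvalMatrix_isInterval pos hpos).isTotallyUnimodular.submatrix id pos

theorem stmt5 {n m k : ℕ} (v : Fin n → Finset (Fin m))
    (hCI : ∃ pos : Equiv.Perm (Fin m), ∀ (i : Fin n) (a b c : Fin m),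
      pos a < pos b → pos b < pos c → a ∈ v i → c ∈ v i → b ∈ v i) :
    IsTU (Matrix.of fun (r : Fin n ⊕ Unit) (col : (Fin n × Fin k) ⊕ Fin m) =>
      match r, col with
      | Sum.inl i, Sum.inl jl => if jl.1 = i then (-1 : ℚ) else 0
      | Sum.inl i, Sum.inr c => if c ∈ v i then 1 else 0
      | Sum.inr _, Sum.inl _ => 0
      | Sum.inr _, Sum.inr _ => 1) := by
  obtain ⟨pos, hpos⟩ := hCI
  rw [isTU_iff_isTotallyUnimodular]
  convert (approvalMatrix_isTotallyUnimodular pos hpos).voterSlackMatrix_fromCols (k := k)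
    using 1
  ext (i | _) (jl | c) <;> simp [voterSlackMatrix, approvalMatrix, eq_comm]
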